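/- Let ρ be a two-qubit density matrix with both local Bloch vectors zero and diagonal correlation matrix diag(t₁,t₂,t₃). Apply local filters F_{ε₁}⊗F_{ε₂} with F_ε = ε|0⟩⟨0|+|1⟩⟨1|. Then the normalized filtered state has correlation-matrix singular values |t₁|ε₁ε₂/c, |t₂|ε₁ε₂/c, and |(1−ε₁²)(1−ε₂²) + t₃(1+ε₁²)(1+ε₂²)|/(4c) where c = [t₃(1−ε₁²)(1−ε₂²) + (1+ε₁²)(1+ε₂²)]/4. -/

import Mathlib

noncomputable section
open Matrix Kronecker
open scoped ComplexOrder

/-- The Pauli matrices σ₁, σ₂, σ₃. -/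
def σp : Fin 3 → Matrix (Fin 2) (Fin 2) ℂ :=
  ![!![0, 1; 1, 0], !![0, -Complex.I; Complex.I, 0], !![1, 0; 0, -1]]

/-- The local filter F_ε = ε|0⟩⟨0| + |1⟩⟨1| on a qubit. -/
def filt (ε : ℝ) : Matrix (Fin 2) (Fin 2) ℂ :=
  (ε : ℂ) • Matrix.single 0 0 1 + Matrix.single 1 1 1

/-- Correlation matrix W_{jk} = Tr[ρ (σ_j ⊗ σ_k)] (real part; W is in fact real). -/
def corr (ρ : Matrix (Fin 2 × Fin 2) (Fin 2 × Fin 2) ℂ) : Matrix (Fin 3) (Fin 3) ℝ :=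
  Matrix.of fun j k => ((ρ * (σp j ⊗ₖ σp k)).trace).re

/-!
Local filters act factorwise on Pauli correlations:
Tr[(A⊗B)(X⊗Y)(A⊗B)ᴴ(P⊗Q)] = Tr[AXAᴴP]·Tr[BYBᴴQ]. For the diagonal filter F_ε,
Tr[F_ε σ_l F_ε σ_j] vanishes for l ≠ j and Tr[F_ε F_ε σ_j] vanishes for j ≠ 3, so the
filtered Bell-diagonal state still has a diagonal correlation matrix W, whose entries are
read off directly. For diagonal W the characteristic polynomial of WᵀW is ∏ᵢ (x − Wᵢᵢ²).
-/

theorem Matrix.trace_kronecker_sandwich {m n R : Type*} [Fintype m] [Fintype n]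
    [CommSemiring R] [StarRing R] (A X P : Matrix m m R) (B Y Q : Matrix n n R) :
    ((A ⊗ₖ B) * (X ⊗ₖ Y) * (A ⊗ₖ B)ᴴ * (P ⊗ₖ Q)).trace =
      (A * X * Aᴴ * P).trace * (B * Y * Bᴴ * Q).trace := by
  rw [conjTranspose_kronecker, ← mul_kronecker_mul, ← mul_kronecker_mul, ← mul_kronecker_mul,
    trace_kronecker]

theorem Matrix.det_smul_one_sub_transpose_mul_diagonal {n R : Type*} [Fintype n]
    [DecidableEq n] [CommRing R] (d : n → R) (x : R) :
    (x • (1 : Matrix n n R) - (diagonal d)ᵀ * diagonal d).det = ∏ i, (x - d i ^ 2) := by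
  simp only [diagonal_transpose, diagonal_mul_diagonal, smul_one_eq_diagonal, diagonal_sub,
    det_diagonal, sq]

theorem filt_eq_fin_two (ε : ℝ) : filt ε = !![(ε : ℂ), 0; 0, 1] := by
  ext i j
  fin_cases i <;> fin_cases j <;> simp [filt]

theorem conjTranspose_filt (ε : ℝ) : (filt ε)ᴴ = filt ε := by
  ext i j
  fin_cases i <;> fin_cases j <;> simp [filt_eq_fin_two]

theorem trace_filt_mul_filt_mul_pauli (ε : ℝ) (j : Fin 3) :
    (filt ε * (filt ε)ᴴ * σp j).trace = ((![0, 0, ε ^ 2 - 1] j : ℝ) : ℂ) := by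
  rw [conjTranspose_filt, filt_eq_fin_two]
  fin_cases j <;> simp [σp, trace_fin_two]
  ring

theorem trace_filt_mul_pauli_mul_filt_mul_pauli (ε : ℝ) (l j : Fin 3) :
    (filt ε * σp l * (filt ε)ᴴ * σp j).trace =
      ((diagonal ![2 * ε, 2 * ε, ε ^ 2 + 1] l j : ℝ) : ℂ) := by
  rw [conjTranspose_filt, filt_eq_fin_two]
  fin_cases l <;> fin_cases j <;> simp [σp, trace_fin_two] <;> ring_nf
  simp [Complex.I_sq]

def bellDiagonal (t : Fin 3 → ℝ) : Matrix (Fin 2 × Fin 2) (Fin 2 × Fin 2) ℂ :=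
  ((1 / 4 : ℝ) : ℂ) • (1 + ∑ j : Fin 3, ((t j : ℝ) : ℂ) • (σp j ⊗ₖ σp j))

theorem trace_filtered_bellDiagonal_mul_pauli (t : Fin 3 → ℝ) (ε1 ε2 : ℝ) (j k : Fin 3) :
    ((filt ε1 ⊗ₖ filt ε2) * bellDiagonal t * (filt ε1 ⊗ₖ filt ε2)ᴴ * (σp j ⊗ₖ σp k)).trace =
      ((1 / 4 : ℝ) : ℂ) *
        ((filt ε1 * (filt ε1)ᴴ * σp j).trace * (filt ε2 * (filt ε2)ᴴ * σp k).trace +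
          ∑ l : Fin 3, (t l : ℂ) * ((filt ε1 * σp l * (filt ε1)ᴴ * σp j).trace *
            (filt ε2 * σp l * (filt ε2)ᴴ * σp k).trace)) := by
  rw [bellDiagonal, ← one_kronecker_one]
  simp only [Matrix.mul_smul, Matrix.smul_mul, Matrix.mul_add, Matrix.add_mul, Matrix.mul_sum,
    Matrix.sum_mul, trace_smul, trace_add, trace_sum, trace_kronecker_sandwich, Matrix.mul_one,
    smul_eq_mul]

theorem corr_filtered_bellDiagonal (t : Fin 3 → ℝ) (ε1 ε2 c : ℝ) :
    corr ((c : ℂ)⁻¹ • ((filt ε1 ⊗ₖ filt ε2) * bellDiagonal t * (filt ε1 ⊗ₖ filt ε2)ᴴ)) =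
      diagonal ![t 0 * ε1 * ε2 / c, t 1 * ε1 * ε2 / c,
        ((1 - ε1 ^ 2) * (1 - ε2 ^ 2) + t 2 * (1 + ε1 ^ 2) * (1 + ε2 ^ 2)) / (4 * c)] := by
  ext j k
  rw [corr, of_apply, Matrix.smul_mul, trace_smul, trace_filtered_bellDiagonal_mul_pauli]
  simp only [Fin.sum_univ_three, trace_filt_mul_filt_mul_pauli,
    trace_filt_mul_pauli_mul_filt_mul_pauli, ← Complex.ofReal_inv, ← Complex.ofReal_mul,
    ← Complex.ofReal_add, smul_eq_mul, Complex.ofReal_re]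
  fin_cases j <;> fin_cases k <;> simp <;> field_simp <;> ring

theorem filtered_bell_diagonal_state_general (t : Fin 3 → ℝ) (ε1 ε2 : ℝ)
    (ρ : Matrix (Fin 2 × Fin 2) (Fin 2 × Fin 2) ℂ)
    (hρ : ρ = ((1 / 4 : ℝ) : ℂ) • ((1 : Matrix (Fin 2 × Fin 2) (Fin 2 × Fin 2) ℂ) +
        ∑ j : Fin 3, ((t j : ℝ) : ℂ) • (σp j ⊗ₖ σp j)))
    (c : ℝ)
    (ρ'' : Matrix (Fin 2 × Fin 2) (Fin 2 × Fin 2) ℂ)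
    (hρ'' : ρ'' = ((c : ℝ) : ℂ)⁻¹ •
      ((filt ε1 ⊗ₖ filt ε2) * ρ * (filt ε1 ⊗ₖ filt ε2)ᴴ)) :
    ∀ x : ℝ, (x • (1 : Matrix (Fin 3) (Fin 3) ℝ) - (corr ρ'')ᵀ * corr ρ'').det =
      (x - (|t 0| * ε1 * ε2 / c) ^ 2) * (x - (|t 1| * ε1 * ε2 / c) ^ 2) *
      (x - (|(1 - ε1 ^ 2) * (1 - ε2 ^ 2) + t 2 * (1 + ε1 ^ 2) * (1 + ε2 ^ 2)| /
        (4 * c)) ^ 2) := by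
  intro x
  obtain rfl : ρ = bellDiagonal t := hρ
  rw [hρ'', corr_filtered_bellDiagonal, det_smul_one_sub_transpose_mul_diagonal,
    Fin.prod_univ_three]
  simp only [Matrix.cons_val, div_pow, mul_pow, sq_abs]

/-- For a Bell-diagonal state ρ = (1/4)(I + Σⱼ tⱼ σⱼ⊗σⱼ) (null local Bloch vectors,
diagonal correlation matrix diag(t₁,t₂,t₃)) filtered by F_{ε₁}⊗F_{ε₂}, the normalized
filtered state has correlation-matrix singular values |t₁|ε₁ε₂/c, |t₂|ε₁ε₂/c and
|(1−ε₁²)(1−ε₂²)+t₃(1+ε₁²)(1+ε₂²)|/(4c), where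
c = [t₃(1−ε₁²)(1−ε₂²)+(1+ε₁²)(1+ε₂²)]/4. -/
theorem filtered_bell_diagonal_state (t : Fin 3 → ℝ) (ε1 ε2 : ℝ)
    (hε1 : ε1 ∈ Set.Ioc (0 : ℝ) 1) (hε2 : ε2 ∈ Set.Ioc (0 : ℝ) 1)
    (ρ : Matrix (Fin 2 × Fin 2) (Fin 2 × Fin 2) ℂ)
    (hρ : ρ = ((1 / 4 : ℝ) : ℂ) • ((1 : Matrix (Fin 2 × Fin 2) (Fin 2 × Fin 2) ℂ) +
        ∑ j : Fin 3, ((t j : ℝ) : ℂ) • (σp j ⊗ₖ σp j)))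
    (hdm : ρ.PosSemidef)
    (c : ℝ)
    (hc : c = (t 2 * (1 - ε1 ^ 2) * (1 - ε2 ^ 2) + (1 + ε1 ^ 2) * (1 + ε2 ^ 2)) / 4)
    (ρ'' : Matrix (Fin 2 × Fin 2) (Fin 2 × Fin 2) ℂ)
    (hρ'' : ρ'' = ((c : ℝ) : ℂ)⁻¹ •
      ((filt ε1 ⊗ₖ filt ε2) * ρ * (filt ε1 ⊗ₖ filt ε2)ᴴ)) :
    ∀ x : ℝ, (x • (1 : Matrix (Fin 3) (Fin 3) ℝ) - (corr ρ'')ᵀ * corr ρ'').det =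
      (x - (|t 0| * ε1 * ε2 / c) ^ 2) * (x - (|t 1| * ε1 * ε2 / c) ^ 2) *
      (x - (|(1 - ε1 ^ 2) * (1 - ε2 ^ 2) + t 2 * (1 + ε1 ^ 2) * (1 + ε2 ^ 2)| /
        (4 * c)) ^ 2) :=
  filtered_bell_diagonal_state_general t ε1 ε2 ρ hρ c ρ'' hρ''
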